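/- arXiv:2604.02303 — 2 statements merged into one kernel-verified Lean document; each statement's English description precedes it below -/
import Mathlib

section
/- For every Boolean network f of dimension n, the following are equivalent: (1) f is Marseille, i.e. f is commutative and bijective; (2) f is globally involutive, i.e. f^{(S)} ∘ f^{(S)} = id for all S ⊆ [n]; (3) the general asynchronous graph GA(f) is symmetric. -/
/-!  Common definitions: Boolean networks on `Fin n → Bool`. -/

/-- The update `f^{(S)}` of the coordinates in `S` according to `f`. -/
def upd {n : ℕ} (f : (Fin n → Bool) → Fin n → Bool) (S : Finset (Fin n)) :
    (Fin n → Bool) → Fin n → Bool :=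
  fun x i => if i ∈ S then f x i else x i

/-- `f^{(S,T)} = f^{(T)} ∘ f^{(S)}`. -/
def upd2 {n : ℕ} (f : (Fin n → Bool) → Fin n → Bool) (S T : Finset (Fin n)) :
    (Fin n → Bool) → Fin n → Bool :=
  upd f T ∘ upd f S

/-- `Δ(x,y)`, the set of coordinates where `x` and `y` differ. -/
def delta {n : ℕ} (x y : Fin n → Bool) : Set (Fin n) := {i | x i ≠ y i}

/-- Hamming distance. -/
noncomputable def hdist {n : ℕ} (x y : Fin n → Bool) : ℕ := (delta x y).ncard

/-- The interval (subcube) `[x,y]`. -/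
def interval {n : ℕ} (x y : Fin n → Bool) : Set (Fin n → Bool) :=
  {z | delta x z ⊆ delta x y}

/-- A subcube of `𝔹^n`: fix the coordinates in `S` to `0` and those in `T` to `1`. -/
def IsSubcube {n : ℕ} (X : Set (Fin n → Bool)) : Prop :=
  ∃ S T : Set (Fin n), Disjoint S T ∧
    X = {x | (∀ i ∈ S, x i = false) ∧ (∀ i ∈ T, x i = true)}

/-- The partial order `f ⊑ g` on Boolean networks. -/
def BNle {n : ℕ} (f g : (Fin n → Bool) → Fin n → Bool) : Prop :=
  ∀ x, delta x (f x) ⊆ delta x (g x)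

/-- A trapspace of `f`: an invariant subcube. -/
def IsTrapspace {n : ℕ} (f : (Fin n → Bool) → Fin n → Bool)
    (X : Set (Fin n → Bool)) : Prop :=
  IsSubcube X ∧ ∀ x ∈ X, f x ∈ X

/-- The collection of all trapspaces of `f`. -/
def trapspaces {n : ℕ} (f : (Fin n → Bool) → Fin n → Bool) :
    Set (Set (Fin n → Bool)) :=
  {X | IsTrapspace f X}

/-- The principal trapspace `T_f(x)`: the smallest trapspace of `f` containing `x`. -/
def Tprin {n : ℕ} (f : (Fin n → Bool) → Fin n → Bool) (x : Fin n → Bool) :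
    Set (Fin n → Bool) :=
  ⋂₀ {X | IsTrapspace f X ∧ x ∈ X}

/-- The collection of principal trapspaces of `f`. -/
def PT {n : ℕ} (f : (Fin n → Bool) → Fin n → Bool) : Set (Set (Fin n → Bool)) :=
  {X | ∃ x, X = Tprin f x}

-- The opposite of `x` in a subcube `X` containing `x`: the coordinate `i` is flipped
-- iff some element of `X` differs from `x` there; so `[x, opp X x] = X` when `X` is a
-- subcube containing `x`.
open scoped Classical in
noncomputable def opp {n : ℕ} (X : Set (Fin n → Bool)) (x : Fin n → Bool) :
    Fin n → Bool :=
  fun i => if ∃ y ∈ X, y i ≠ x i then !(x i) else x i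

/-- The trapping closure `f^T`, characterised by `[x, f^T(x)] = T_f(x)`. -/
noncomputable def trapClosure {n : ℕ} (f : (Fin n → Bool) → Fin n → Bool) :
    (Fin n → Bool) → Fin n → Bool :=
  fun x => opp (Tprin f x) x

/-- The general asynchronous graph of `f`, as a relation on `𝔹^n`. -/
def GA {n : ℕ} (f : (Fin n → Bool) → Fin n → Bool) :
    (Fin n → Bool) → (Fin n → Bool) → Prop :=
  fun x y => ∃ S : Finset (Fin n), y = upd f S x

/-- The asynchronous graph of `f`, as a relation on `𝔹^n`. -/
def Agraph {n : ℕ} (f : (Fin n → Bool) → Fin n → Bool) :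
    (Fin n → Bool) → (Fin n → Bool) → Prop :=
  fun x y => ∃ i : Fin n, y = upd f {i} x

/-- The trapping graph of `f`: an edge `(x,y)` iff `y ∈ T_f(x)`. -/
def TG {n : ℕ} (f : (Fin n → Bool) → Fin n → Bool) :
    (Fin n → Bool) → (Fin n → Bool) → Prop :=
  fun x y => y ∈ Tprin f x

/-- A network is trapping if its general asynchronous graph is transitive. -/
def IsTrapping {n : ℕ} (f : (Fin n → Bool) → Fin n → Bool) : Prop :=
  Transitive (GA f)

/-- A commutative Boolean network: `f^{(i,j)} = f^{(j,i)}` for all `i,j`. -/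
def IsCommutative' {n : ℕ} (f : (Fin n → Bool) → Fin n → Bool) : Prop :=
  ∀ i j : Fin n, upd2 f {i} {j} = upd2 f {j} {i}

/-- `𝒜(x)`: the intersection of all members of `𝒜` containing `x`
(`= 𝔹^n` if no member contains `x`, since `⋂₀ ∅ = univ`). -/
def collAt {n : ℕ} (𝒜 : Set (Set (Fin n → Bool))) (x : Fin n → Bool) :
    Set (Fin n → Bool) :=
  ⋂₀ {A ∈ 𝒜 | x ∈ A}

/-- The network `F(𝒜)`, characterised by `[x, F(𝒜)(x)] = 𝒜(x)`. -/
noncomputable def Fnet {n : ℕ} (𝒜 : Set (Set (Fin n → Bool))) :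
    (Fin n → Bool) → Fin n → Bool :=
  fun x => opp (collAt 𝒜 x) x

/-- A collection of subcubes is pre-principal if `𝒬 = {𝒬(x) : x ∈ 𝔹^n}`. -/
def PrePrincipal {n : ℕ} (𝒬 : Set (Set (Fin n → Bool))) : Prop :=
  𝒬 = {X | ∃ x, X = collAt 𝒬 x}

/-- `λ(𝒜)`: unions of subcollections of `𝒜` that are subcubes. -/
def lamColl {n : ℕ} (𝒜 : Set (Set (Fin n → Bool))) : Set (Set (Fin n → Bool)) :=
  {X | ∃ ℛ ⊆ 𝒜, X = ⋃₀ ℛ ∧ IsSubcube X}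

/-- `μ(𝒜) = {𝒜(x) : x ∈ 𝔹^n}`. -/
def muColl {n : ℕ} (𝒜 : Set (Set (Fin n → Bool))) : Set (Set (Fin n → Bool)) :=
  {X | ∃ x, X = collAt 𝒜 x}

/-- A pre-ideal collection of subcubes. -/
def PreIdeal {n : ℕ} (𝒥 : Set (Set (Fin n → Bool))) : Prop :=
  Set.univ ∈ 𝒥 ∧
  (∀ A ∈ 𝒥, ∀ B ∈ 𝒥, (A ∩ B).Nonempty → A ∩ B ∈ 𝒥) ∧
  (∀ ℛ ⊆ 𝒥, IsSubcube (⋃₀ ℛ) → ⋃₀ ℛ ∈ 𝒥)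

/-- The collection of minimal trapspaces of `f`. -/
def MT {n : ℕ} (f : (Fin n → Bool) → Fin n → Bool) : Set (Set (Fin n → Bool)) :=
  {X | IsTrapspace f X ∧ ∀ Y, IsTrapspace f Y → ¬ Y ⊂ X}

/-- `M(f)`: the union of the minimal trapspaces of `f`. -/
def Mset {n : ℕ} (f : (Fin n → Bool) → Fin n → Bool) : Set (Fin n → Bool) :=
  ⋃₀ MT f

-- The min-trapping extension `f^M`: `[x, f^M(x)] = T_f(x)` if `x ∈ M(f)`,
-- and `f^M(x) = ¬x` otherwise.
open scoped Classical in
noncomputable def minExt {n : ℕ} (f : (Fin n → Bool) → Fin n → Bool) :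
    (Fin n → Bool) → Fin n → Bool :=
  fun x => if x ∈ Mset f then opp (Tprin f x) x else fun i => !(x i)
/-!
Along an edge `x → y` of a symmetric general asynchronous graph, a coordinate `j` is fixed
(`f(x)_j = x_j`) at `x` iff it is fixed at `y`: if `x_j ≠ y_j` the reverse edge forces
`f(y)_j = x_j`, and otherwise one detours through `y` with `j` flipped. Read at `y = f^{(S)}(x)`
this makes every `f^{(S)}` an involution, and read at `y = f^{(i)}(x)`, `j ≠ i`, it says that
updating `i` never changes `f_j`, which is commutativity.

Conversely, commutativity says exactly that updating `i` leaves every `f_j`, `j ≠ i`, unchanged,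
so `f^{(S)} = f^{(i)} ∘ f^{(S \ {i})}` for `i ∈ S`; injectivity of `f` forbids `f^{(i)}` from
moving `x` to a point with the same image, which makes each `f^{(i)}` involutive.
-/

section BooleanNetwork

variable {n : ℕ} {f : (Fin n → Bool) → Fin n → Bool}

lemma upd_of_mem {S : Finset (Fin n)} {x : Fin n → Bool} {i : Fin n} (hi : i ∈ S) :
    upd f S x i = f x i :=
  if_pos hi

lemma upd_of_notMem {S : Finset (Fin n)} {x : Fin n → Bool} {i : Fin n} (hi : i ∉ S) :
    upd f S x i = x i :=
  if_neg hi

lemma upd_univ : upd f Finset.univ = f := by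
  funext x i
  exact upd_of_mem (Finset.mem_univ i)

lemma upd_insert {S : Finset (Fin n)} {x : Fin n → Bool} {i : Fin n}
    (h : f (upd f S x) i = f x i) : upd f (insert i S) x = upd f {i} (upd f S x) := by
  funext k
  rcases eq_or_ne k i with rfl | hk
  · rw [upd_of_mem (Finset.mem_insert_self k S), upd_of_mem (Finset.mem_singleton_self k), h]
  · rw [upd_of_notMem (S := {i}) (by simpa using hk)]
    by_cases hkS : k ∈ S
    · rw [upd_of_mem (Finset.mem_insert_of_mem hkS), upd_of_mem hkS]
    · rw [upd_of_notMem (by simp [hk, hkS]), upd_of_notMem hkS]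

lemma ga_iff {x y : Fin n → Bool} : GA f x y ↔ ∀ i, x i ≠ y i → f x i = y i := by
  constructor
  · rintro ⟨S, rfl⟩ i hi
    by_cases hiS : i ∈ S
    · exact (upd_of_mem hiS).symm
    · exact absurd (upd_of_notMem hiS).symm hi
  · intro h
    refine ⟨Finset.univ.filter fun i => x i ≠ y i, funext fun i => ?_⟩
    by_cases hxy : x i = y i
    · rw [upd_of_notMem (by simp [hxy]), hxy]
    · rw [upd_of_mem (by simp [hxy]), h i hxy]

lemma symmetric_ga_of_upd_involutive (h : ∀ S, upd f S ∘ upd f S = id) : Symmetric (GA f) := by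
  rintro x _ ⟨S, rfl⟩
  exact ⟨S, (congrFun (h S) x).symm⟩

lemma isCommutative'_iff :
    IsCommutative' f ↔ ∀ i j, j ≠ i → ∀ x, f (upd f {i} x) j = f x j := by
  constructor
  · intro hc i j hji x
    simpa [upd2, upd, hji] using congrFun (congrFun (hc i j) x) j
  · intro h i j
    funext x k
    rcases eq_or_ne i j with rfl | hij
    · rfl
    simp only [upd2, Function.comp_apply]
    rcases eq_or_ne k j with rfl | hkj
    · rw [upd_of_mem (Finset.mem_singleton_self k), h i k hij.symm,
        upd_of_notMem (by simpa using hij.symm), upd_of_mem (Finset.mem_singleton_self k)]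
    rcases eq_or_ne k i with rfl | hki
    · rw [upd_of_notMem (by simpa using hkj), upd_of_mem (Finset.mem_singleton_self k),
        upd_of_mem (Finset.mem_singleton_self k), h j k hkj]
    rw [upd_of_notMem (by simpa using hkj), upd_of_notMem (by simpa using hki),
      upd_of_notMem (by simpa using hki), upd_of_notMem (by simpa using hkj)]

section Symmetric

variable (hs : Symmetric (GA f))
include hs

lemma apply_eq_of_ga_of_ne {x y : Fin n → Bool} (hxy : GA f x y) {j : Fin n} (hj : x j ≠ y j) :
    f y j = x j :=
  ga_iff.1 (hs hxy) j hj.symm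

lemma apply_ne_of_ga {x y : Fin n → Bool} (hxy : GA f x y) {j : Fin n} (hj : f x j ≠ x j) :
    f y j ≠ y j := by
  by_cases hxyj : x j = y j
  swap
  · rw [apply_eq_of_ga_of_ne hs hxy hxyj]
    exact hxyj
  set z := Function.update y j (f x j)
  have hxz : GA f x z := ga_iff.2 fun i hi => by
    rcases eq_or_ne i j with rfl | hij
    · simp [z]
    · simp only [z, Function.update_of_ne hij] at hi ⊢
      exact ga_iff.1 hxy i hi
  have hzj : f z j = x j := apply_eq_of_ga_of_ne hs hxz (by simpa [z] using hj.symm)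
  have hzy : GA f z y := ga_iff.2 fun i hi => by
    rcases eq_or_ne i j with rfl | hij
    · rw [hzj, hxyj]
    · simp [z, hij] at hi
  rw [apply_eq_of_ga_of_ne hs hzy (by simpa [z, ← hxyj] using hj)]
  simpa [z, ← hxyj] using hj

lemma apply_eq_self_iff_of_ga {x y : Fin n → Bool} (hxy : GA f x y) (j : Fin n) :
    f y j = y j ↔ f x j = x j :=
  ⟨not_imp_not.1 (apply_ne_of_ga hs hxy), not_imp_not.1 (apply_ne_of_ga hs (hs hxy))⟩

lemma upd_upd_of_symmetric (S : Finset (Fin n)) (x : Fin n → Bool) :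
    upd f S (upd f S x) = x := by
  funext i
  by_cases hi : i ∈ S
  swap
  · rw [upd_of_notMem hi, upd_of_notMem hi]
  have hxy : GA f x (upd f S x) := ⟨S, rfl⟩
  rw [upd_of_mem hi]
  by_cases hxi : x i = upd f S x i
  · have hfix : f x i = x i := by rw [hxi, upd_of_mem hi]
    rw [(apply_eq_self_iff_of_ga hs hxy i).2 hfix, ← hxi]
  · exact apply_eq_of_ga_of_ne hs hxy hxi

lemma involutive_of_symmetric : Function.Involutive f := fun x => by
  simpa [upd_univ] using upd_upd_of_symmetric hs Finset.univ x

lemma isCommutative'_of_symmetric : IsCommutative' f := by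
  refine isCommutative'_iff.2 fun i j hji x => ?_
  have hxj : upd f {i} x j = x j := upd_of_notMem (by simpa using hji)
  have hfix := apply_eq_self_iff_of_ga hs ⟨{i}, rfl⟩ j (x := x)
  rw [hxj] at hfix
  revert hfix
  cases f (upd f {i} x) j <;> cases f x j <;> simp

end Symmetric

section Marseille

variable (hc : IsCommutative' f)
include hc

lemma IsCommutative'.apply_upd_of_notMem {S : Finset (Fin n)} (x : Fin n → Bool) {j : Fin n}
    (hj : j ∉ S) : f (upd f S x) j = f x j := by
  induction S using Finset.induction_on generalizing j with
  | empty => rfl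
  | insert i S hiS ih =>
    rw [Finset.mem_insert, not_or] at hj
    rw [upd_insert (ih hiS), isCommutative'_iff.1 hc i j hj.1, ih hj.2]

lemma IsCommutative'.apply_upd_single_self (hf : Function.Injective f) (i : Fin n)
    (x : Fin n → Bool) : f (upd f {i} x) i = x i := by
  by_cases hfx : f x i = x i
  · have hx : upd f {i} x = x := funext fun k => by
      rcases eq_or_ne k i with rfl | hk
      · exact (upd_of_mem (Finset.mem_singleton_self k)).trans hfx
      · exact upd_of_notMem (by simpa using hk)
    rw [hx, hfx]
  have hmoved : upd f {i} x ≠ x := fun h => hfx (by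
    simpa [upd_of_mem (Finset.mem_singleton_self i)] using congrFun h i)
  have hi : f (upd f {i} x) i ≠ f x i := fun h => hf.ne hmoved (funext fun j => by
    rcases eq_or_ne j i with rfl | hji
    · exact h
    · exact isCommutative'_iff.1 hc i j hji x)
  revert hi hfx
  cases f (upd f {i} x) i <;> cases f x i <;> cases x i <;> simp

lemma IsCommutative'.upd_upd (hf : Function.Injective f) (S : Finset (Fin n))
    (x : Fin n → Bool) : upd f S (upd f S x) = x := by
  funext i
  by_cases hi : i ∈ S
  swap
  · rw [upd_of_notMem hi, upd_of_notMem hi]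
  have hiT : i ∉ S.erase i := Finset.notMem_erase i S
  have hsplit : upd f S x = upd f {i} (upd f (S.erase i) x) := by
    rw [← upd_insert (hc.apply_upd_of_notMem x hiT), Finset.insert_erase hi]
  rw [upd_of_mem hi, hsplit, hc.apply_upd_single_self hf, upd_of_notMem hiT]

end Marseille

end BooleanNetwork

/-- Marseille ↔ globally involutive ↔ symmetric general asynchronous
graph. -/
theorem stmt15 (n : ℕ) (f : (Fin n → Bool) → Fin n → Bool) :
    List.TFAE [
      IsCommutative' f ∧ Function.Bijective f,
      ∀ S : Finset (Fin n), upd f S ∘ upd f S = id,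
      Symmetric (GA f)
    ] := by
  tfae_have 1 → 2 := fun ⟨hc, hf⟩ S => funext (hc.upd_upd hf.injective S)
  tfae_have 2 → 3 := symmetric_ga_of_upd_involutive
  tfae_have 3 → 1 := fun hs =>
    ⟨isCommutative'_of_symmetric hs, (involutive_of_symmetric hs).bijective⟩
  tfae_finish
end

section
/- Let f be a trapping Boolean network of dimension n. Then f^{n+2} = f^n (iterating f), and every periodic point of f has period at most 2 (if f^k(x) = x for some k ≥ 1 then f^2(x) = x). Moreover, if f is additionally bijective, then f is involutive, i.e. f ∘ f = id. -/
/-!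
If `f` is trapping, transitivity puts `f (f x)` into `[x, f x]`; as `f x` lies there too,
`Δ(f x, f (f x)) ⊆ Δ(x, f x)`, with equality only if `f (f x) = x`. Along an orbit the
distances `|Δ(fᵏ x, fᵏ⁺¹ x)| ≤ n` therefore strictly decrease until the orbit reaches a
`2`-cycle, which must happen within `n` steps; this gives `f^{n+2} = f^n`. Periodic
points, and all points when `f` is bijective, lie in the image of `f^n`, on which `f^2`
is the identity.
-/

theorem Nat.exists_le_apply_succ_eq_of_antitone {d : ℕ → ℕ} (hd : Antitone d) :
    ∃ k ≤ d 0, d (k + 1) = d k := by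
  by_contra! hne
  have hdrop : ∀ k ≤ d 0 + 1, d k + k ≤ d 0 := by
    intro k hk
    induction k with
    | zero => simp
    | succ k ih =>
      have hlt : d (k + 1) < d k := (hd k.le_succ).lt_of_ne (hne k (by omega))
      have hle := ih (by omega)
      omega
  have := hdrop (d 0 + 1) le_rfl
  omega

namespace Function

variable {α : Type*} {f : α → α}

theorem iterate_add_two_apply_of_le {x : α} {k m : ℕ} (hkm : k ≤ m)
    (h : f^[k + 2] x = f^[k] x) : f^[m + 2] x = f^[m] x := by
  obtain ⟨j, rfl⟩ := Nat.exists_eq_add_of_le' hkm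
  rw [add_assoc, iterate_add_apply, h, ← iterate_add_apply]

theorem iterate_two_apply_eq_self_of_mem_range {m : ℕ} (h : f^[m + 2] = f^[m]) {x : α}
    (hx : x ∈ Set.range f^[m]) : f^[2] x = x := by
  obtain ⟨y, rfl⟩ := hx
  rw [← iterate_add_apply, add_comm, h]

theorem IsPeriodicPt.mem_range_iterate {k : ℕ} {x : α} (hk : 0 < k) (hx : IsPeriodicPt f k x)
    (m : ℕ) : x ∈ Set.range f^[m] := by
  obtain ⟨j, hj⟩ := Nat.exists_eq_add_of_le (Nat.le_mul_of_pos_left m hk)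
  refine ⟨f^[j] x, ?_⟩
  rw [← iterate_add_apply, ← hj]
  exact (hx.mul_const m).eq

end Function

section Cube

variable {n : ℕ}

theorem mem_interval_right (x y : Fin n → Bool) : y ∈ interval x y :=
  Set.Subset.rfl

theorem delta_subset_of_mem_interval {x v y w : Fin n → Bool} (hy : y ∈ interval x v)
    (hw : w ∈ interval x v) : delta y w ⊆ delta x v := by
  intro i hi
  by_contra hxv
  have hxy : x i = y i := not_not.1 fun h => hxv (hy h)
  have hxw : x i = w i := not_not.1 fun h => hxv (hw h)
  exact hi (hxy.symm.trans hxw)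

theorem eq_of_delta_eq {x y w : Fin n → Bool} (h : delta y w = delta x y) : w = x := by
  funext i
  have hi : y i ≠ w i ↔ x i ≠ y i := Set.ext_iff.1 h i
  revert hi
  cases x i <;> cases y i <;> cases w i <;> decide

theorem hdist_le (x y : Fin n → Bool) : hdist x y ≤ n :=
  (Set.ncard_le_ncard (Set.subset_univ _)).trans_eq (by simp [Set.ncard_univ])

theorem ga_iff_mem_interval (f : (Fin n → Bool) → Fin n → Bool) (x y : Fin n → Bool) :
    GA f x y ↔ y ∈ interval x (f x) := by
  classical
  constructor
  · rintro ⟨S, rfl⟩ i hi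
    by_cases hiS : i ∈ S <;> simp_all [delta, upd]
  · intro hy
    refine ⟨Finset.univ.filter fun i => x i ≠ y i, funext fun i => ?_⟩
    by_cases hxy : x i = y i
    · simp [upd, hxy]
    · have hxf : x i ≠ f x i := hy hxy
      simp only [upd, Finset.mem_filter, Finset.mem_univ, true_and, if_pos hxy]
      revert hxy hxf
      cases x i <;> cases y i <;> cases f x i <;> decide

end Cube

namespace IsTrapping

variable {n : ℕ} {f : (Fin n → Bool) → Fin n → Bool}

theorem delta_apply_subset (hf : IsTrapping f) (x : Fin n → Bool) :
    delta (f x) (f (f x)) ⊆ delta x (f x) := by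
  have hfx : GA f x (f x) := (ga_iff_mem_interval f _ _).2 (mem_interval_right _ _)
  have hffx : GA f (f x) (f (f x)) := (ga_iff_mem_interval f _ _).2 (mem_interval_right _ _)
  exact delta_subset_of_mem_interval (mem_interval_right _ _)
    ((ga_iff_mem_interval f x _).1 (hf hfx hffx))

theorem apply_apply_eq_of_hdist_eq (hf : IsTrapping f) {x : Fin n → Bool}
    (h : hdist (f x) (f (f x)) = hdist x (f x)) : f (f x) = x :=
  eq_of_delta_eq <| Set.eq_of_subset_of_ncard_le (hf.delta_apply_subset x) h.ge

theorem exists_le_iterate_add_two_apply (hf : IsTrapping f) (x : Fin n → Bool) :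
    ∃ k ≤ n, f^[k + 2] x = f^[k] x := by
  set d : ℕ → ℕ := fun k => hdist (f^[k] x) (f^[k + 1] x)
  have hd : Antitone d := antitone_nat_of_succ_le fun k => by
    simpa only [d, hdist, Function.iterate_succ_apply'] using
      Set.ncard_le_ncard (hf.delta_apply_subset (f^[k] x))
  obtain ⟨k, hk, hdk⟩ := Nat.exists_le_apply_succ_eq_of_antitone hd
  refine ⟨k, hk.trans (hdist_le _ _), ?_⟩
  simp only [d, Function.iterate_succ_apply'] at hdk
  simpa only [Function.iterate_succ_apply'] using hf.apply_apply_eq_of_hdist_eq hdk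

theorem iterate_add_two (hf : IsTrapping f) : f^[n + 2] = f^[n] := funext fun x => by
  obtain ⟨k, hk, hx⟩ := hf.exists_le_iterate_add_two_apply x
  exact Function.iterate_add_two_apply_of_le hk hx

end IsTrapping

/-- a trapping network satisfies `f^{n+2} = f^n`, its periodic points
have period at most 2, and if moreover it is bijective then it is involutive. -/
theorem stmt17 (n : ℕ) (f : (Fin n → Bool) → Fin n → Bool) (hf : IsTrapping f) :
    f^[n + 2] = f^[n] ∧
    (∀ (x : Fin n → Bool) (k : ℕ), 1 ≤ k → f^[k] x = x → f^[2] x = x) ∧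
    (Function.Bijective f → f ∘ f = id) := by
  have hstab := hf.iterate_add_two
  refine ⟨hstab, fun x k hk hx => ?_, fun hbij => funext fun x => ?_⟩
  · exact Function.iterate_two_apply_eq_self_of_mem_range hstab
      (Function.IsPeriodicPt.mem_range_iterate hk hx n)
  · exact Function.iterate_two_apply_eq_self_of_mem_range hstab
      ((hbij.surjective.iterate n) x)
end
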